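/- Let T be a simple type and F_0, F_1, …, F_k : ⟦T⟧ a finite sequence such that for every i < k one has 1_T ⊕_T F_{i+1} ≤ F_i (i.e., each step strictly decreases in the sense F_{i+1} < F_i of the paper). Then k_T ⊕_T F_k ≤ F_0, where k_T is the constant element of ⟦T⟧ associated with the natural number k. (This is the abstract content of the paper's Corollary: the interpretation of the initial term dominates the number of counted reduction steps plus the interpretation of the final term.) -/
import Mathlib


inductive Ty : Type
  | base : Ty
  | arrow : Ty → Ty → Ty

noncomputable def InterpData : Ty → (α : Type) × CompleteLattice α
  | .base => ⟨WithTop ℕ, inferInstance⟩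
  | .arrow T T' =>
      letI := (InterpData T).2
      letI := (InterpData T').2
      ⟨(InterpData T).1 →o (InterpData T').1, inferInstance⟩

def Interp (T : Ty) : Type := (InterpData T).1

noncomputable instance (T : Ty) : CompleteLattice (Interp T) := (InterpData T).2

def Interp.toHom {T T' : Ty} (F : Interp (.arrow T T')) : Interp T →o Interp T' := F

def Interp.ofHom {T T' : Ty} (F : Interp T →o Interp T') : Interp (.arrow T T') := F

def Interp.toN (a : Interp .base) : WithTop ℕ := a

def Interp.ofN (a : WithTop ℕ) : Interp .base := a

/-- The dyadic sum `⊕_T`, defined by recursion on `T`, bundled with the proof that it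
is monotone in both arguments (used to show it is well defined at arrow types). -/
noncomputable def sumAux : ∀ T : Ty, { f : Interp T → Interp T → Interp T //
    ∀ a a' b b' : Interp T, a ≤ a' → b ≤ b' → f a b ≤ f a' b' }
  | .base => ⟨fun a b => Interp.ofN (a.toN + b.toN),
      fun a a' b b' h h' =>
        show a.toN + b.toN ≤ a'.toN + b'.toN from add_le_add h h'⟩
  | .arrow T T' =>
      ⟨fun F G => Interp.ofHom
        ⟨fun X => (sumAux T').1 (F.toHom X) (G.toHom X),
         fun x y hxy => (sumAux T').2 _ _ _ _ (F.toHom.mono hxy) (G.toHom.mono hxy)⟩,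
       fun F F' G G' hF hG X => (sumAux T').2 _ _ _ _ (hF X) (hG X)⟩

/-- `F ⊕_T G`. -/
noncomputable def oplus (T : Ty) (F G : Interp T) : Interp T := (sumAux T).1 F G

/-- The constant element `n_T : ⟦T⟧` associated with a natural number `n`. -/
noncomputable def constT (n : ℕ) : ∀ T : Ty, Interp T
  | .base => Interp.ofN (n : WithTop ℕ)
  | .arrow T T' => Interp.ofHom (OrderHom.const (Interp T) (constT n T'))


lemma oplus_mono (T : Ty) {a a' b b' : Interp T} (h : a ≤ a') (h' : b ≤ b') :
    oplus T a b ≤ oplus T a' b' := (sumAux T).2 _ _ _ _ h h'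

lemma oplus_const_succ (T : Ty) (n : ℕ) (x : Interp T) :
    oplus T (constT (n + 1) T) x = oplus T (constT n T) (oplus T (constT 1 T) x) := by
  induction T with
  | base =>
      show Interp.ofN _ = Interp.ofN _
      show ((n + 1 : ℕ) : WithTop ℕ) + _ = (n : WithTop ℕ) + ((1 : ℕ) + _)
      push_cast
      ring
  | arrow T T' ih ih' =>
      exact OrderHom.ext (α := Interp T) (β := Interp T') _ _ (funext fun X => ih' _)

theorem steps_le_of_strict_decrease' (T : Ty) (k : ℕ) (F : ℕ → Interp T)
    (h : ∀ i < k, oplus T (constT 1 T) (F (i + 1)) ≤ F i) :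
    oplus T (constT k T) (F k) ≤ F 0 := by
  induction k with
  | zero =>
      induction T with
      | base =>
          show ((0:ℕ) : WithTop ℕ) + Interp.toN (F 0) ≤ Interp.toN (F 0)
          simp
      | arrow T T' ih ih' =>
          intro X
          exact ih' (fun i => (F i).toHom X) (fun i hi => h i hi X)
  | succ k ih =>
      calc oplus T (constT (k + 1) T) (F (k + 1))
          = oplus T (constT k T) (oplus T (constT 1 T) (F (k + 1))) :=
            oplus_const_succ T k _
        _ ≤ oplus T (constT k T) (F k) :=
            oplus_mono T le_rfl (h k (Nat.lt_succ_self k))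
        _ ≤ F 0 := ih (fun i hi => h i (hi.trans (Nat.lt_succ_self k)))

/-- If each step of a finite sequence in `⟦T⟧` strictly decreases, in the sense that
`1_T ⊕_T F_{i+1} ≤ F_i` (i.e. `F_{i+1} < F_i` in the paper's sense), then
`k_T ⊕_T F_k ≤ F_0`: the initial element dominates the number of steps plus the
final element. -/
theorem steps_le_of_strict_decrease (T : Ty) (k : ℕ) (F : ℕ → Interp T)
    (h : ∀ i < k, oplus T (constT 1 T) (F (i + 1)) ≤ F i) :
    oplus T (constT k T) (F k) ≤ F 0 :=
  steps_le_of_strict_decrease' T k F h
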